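/- arXiv:1701.01564 — 7 statements merged into one kernel-verified Lean document; each statement's English description precedes it below -/
import Mathlib

section
/- If H is an intersecting hypergraph of rank r (every edge has size at least 2 and at most r) without isolated vertices, then γ(H) ≤ r − 1. -/
open Finset

variable {V : Type*} [DecidableEq V] [Fintype V]

/-- A set `D` dominates: every vertex outside `D` lies in an edge meeting `D`. -/
def isDominating (E : Finset (Finset V)) (D : Finset V) : Prop :=
  ∀ v : V, v ∉ D → ∃ e ∈ E, v ∈ e ∧ ∃ u ∈ e, u ∈ D

/-- Domination number. -/
noncomputable def domNum (E : Finset (Finset V)) : ℕ :=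
  sInf {n | ∃ D : Finset V, isDominating E D ∧ D.card = n}

/-- A transversal meets every edge. -/
def isTransversal (E : Finset (Finset V)) (T : Finset V) : Prop :=
  ∀ e ∈ E, ∃ v ∈ e, v ∈ T

/-- Transversal number. -/
noncomputable def tauNum (E : Finset (Finset V)) : ℕ :=
  sInf {n | ∃ T : Finset V, isTransversal E T ∧ T.card = n}

/-- A matching: a set of pairwise disjoint edges of `E`. -/
def isMatching (E M : Finset (Finset V)) : Prop :=
  M ⊆ E ∧ ∀ e ∈ M, ∀ f ∈ M, e ≠ f → e ∩ f = ∅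

/-- Matching number. -/
noncomputable def matchNum (E : Finset (Finset V)) : ℕ :=
  sSup {n | ∃ M : Finset (Finset V), isMatching E M ∧ M.card = n}

/-- Intersecting: any two edges meet. -/
def Intersecting (E : Finset (Finset V)) : Prop :=
  ∀ e ∈ E, ∀ f ∈ E, (e ∩ f).Nonempty

/-- Linear: any two distinct edges meet in at most one vertex. -/
def Linear (E : Finset (Finset V)) : Prop :=
  ∀ e ∈ E, ∀ f ∈ E, e ≠ f → (e ∩ f).card ≤ 1

/-- No isolated vertices: every vertex lies in some edge. -/
def NoIsolated (E : Finset (Finset V)) : Prop :=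
  ∀ v : V, ∃ e ∈ E, v ∈ e

/-- Degree of a vertex. -/
def degree (E : Finset (Finset V)) (v : V) : ℕ :=
  (E.filter (fun e => v ∈ e)).card

/-- Maximum degree. -/
def maxDegree (E : Finset (Finset V)) : ℕ :=
  Finset.univ.sup (fun v => degree E v)

/-- Quasidegree: max number of edges containing `v` pairwise intersecting exactly in `{v}`. -/
noncomputable def quasidegree (E : Finset (Finset V)) (v : V) : ℕ :=
  sSup {n | ∃ S : Finset (Finset V), S ⊆ E ∧ S.card = n ∧ (∀ e ∈ S, v ∈ e) ∧
    ∀ e ∈ S, ∀ f ∈ S, e ≠ f → e ∩ f = {v}}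

theorem stmt_3 (E : Finset (Finset V)) (r : ℕ)
    (hrank : ∀ e ∈ E, 2 ≤ e.card ∧ e.card ≤ r)
    (hint : Intersecting E) (hni : NoIsolated E) :
    domNum E ≤ r - 1 := by
  have key : ∃ D : Finset V, isDominating E D ∧ D.card ≤ r - 1 := by
    by_cases hE : E.Nonempty
    · obtain ⟨e, he⟩ := hE
      obtain ⟨h2, hr⟩ := hrank e he
      obtain ⟨x, hx⟩ := Finset.card_pos.mp (show 0 < e.card by omega)
      have hcard : (e.erase x).card ≤ r - 1 := by
        rw [Finset.card_erase_of_mem hx]; omega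
      by_cases hd : isDominating E (e.erase x)
      · exact ⟨e.erase x, hd, hcard⟩
      · simp only [isDominating, not_forall] at hd
        obtain ⟨v, hv1, hv2⟩ := hd
        push_neg at hv2
        -- every edge containing v meets e only in x
        have hvx : v ≠ x := by
          intro hvx
          have h1 : 1 ≤ (e.erase x).card := by
            rw [Finset.card_erase_of_mem hx]; omega
          obtain ⟨u, hu⟩ := Finset.card_pos.mp (lt_of_lt_of_le one_pos h1)
          exact hv2 e he (hvx ▸ hx) u (Finset.mem_of_mem_erase hu) hu
        have hxh : ∀ h ∈ E, v ∈ h → x ∈ h := by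
          intro h hh hvh
          obtain ⟨p, hp⟩ := hint h hh e he
          rw [Finset.mem_inter] at hp
          have := hv2 h hh hvh p hp.1
          have : p = x := by
            by_contra hne
            exact this (Finset.mem_erase.mpr ⟨hne, hp.2⟩)
          exact this ▸ hp.1
        obtain ⟨g, hg, hvg⟩ := hni v
        have hxg : x ∈ g := hxh g hg hvg
        refine ⟨g.erase v, ?_, by
          rw [Finset.card_erase_of_mem hvg]
          have := (hrank g hg).2; omega⟩
        intro u hu
        obtain ⟨h, hh, huh⟩ := hni u
        refine ⟨h, hh, huh, ?_⟩
        obtain ⟨p, hp⟩ := hint h hh g hg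
        rw [Finset.mem_inter] at hp
        by_cases hpv : p = v
        · -- v ∈ h, so x ∈ h, and x ∈ g, x ≠ v
          have hvh : v ∈ h := hpv ▸ hp.1
          exact ⟨x, hxh h hh hvh, Finset.mem_erase.mpr ⟨Ne.symm hvx, hxg⟩⟩
        · exact ⟨p, hp.1, Finset.mem_erase.mpr ⟨hpv, hp.2⟩⟩
    · rw [Finset.not_nonempty_iff_eq_empty] at hE
      refine ⟨∅, ?_, by simp⟩
      intro v _
      obtain ⟨f, hf, _⟩ := hni v
      simp [hE] at hf
  obtain ⟨D, hD, hDc⟩ := key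
  exact le_trans (Nat.sInf_le ⟨D, hD, rfl⟩) hDc
end

section
/- If H is a hypergraph of rank r ≥ 2 without isolated vertices, then γ(H) ≤ (r − 1)·α'(H). -/
/-!
Induct on the number of edges. Choose an edge `e` and a pivot `x ∈ e` such that every covered
vertex outside `e` lies in an edge meeting `e` somewhere other than in `x` alone; such a pair
always exists. Then `e \ {x}` (at most `r - 1` vertices) dominates every vertex that is not
covered by an edge disjoint from `e`, and the edges disjoint from `e` have matching number at
most `α'(H) - 1`, so induction handles the rest.
-/

open Finset

variable {V : Type*} [DecidableEq V] [Fintype V]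

section Domination

omit [Fintype V]

def DominatesCovered (E : Finset (Finset V)) (D : Finset V) : Prop :=
  ∀ v : V, (∃ f ∈ E, v ∈ f) → v ∉ D → ∃ f ∈ E, v ∈ f ∧ ∃ u ∈ f, u ∈ D

omit [DecidableEq V] in
lemma domNum_le_card {E : Finset (Finset V)} {D : Finset V} (hD : isDominating E D) :
    domNum E ≤ D.card :=
  Nat.sInf_le ⟨D, hD, rfl⟩

omit [DecidableEq V] in
lemma DominatesCovered.isDominating {E : Finset (Finset V)} {D : Finset V}
    (hD : DominatesCovered E D) (hni : NoIsolated E) : isDominating E D :=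
  fun v hv => hD v (hni v) hv

omit [DecidableEq V] in
lemma Finset.Nonempty.not_disjoint_self {e : Finset V} (hne : e.Nonempty) : ¬Disjoint e e :=
  hne.ne_empty ∘ (disjoint_self_iff_empty e).1

section Matching

variable (E : Finset (Finset V))

lemma bddAbove_matching_cards :
    BddAbove {n | ∃ M : Finset (Finset V), isMatching E M ∧ M.card = n} := by
  refine ⟨E.card, ?_⟩
  rintro n ⟨M, hM, rfl⟩
  exact card_le_card hM.1

lemma exists_isMatching_card_eq_matchNum :
    ∃ M : Finset (Finset V), isMatching E M ∧ M.card = matchNum E := by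
  refine Nat.sSup_mem ?_ (bddAbove_matching_cards E)
  exact ⟨0, ∅, ⟨empty_subset _, by simp⟩, card_empty⟩

lemma card_le_matchNum {M : Finset (Finset V)} (hM : isMatching E M) :
    M.card ≤ matchNum E :=
  le_csSup (bddAbove_matching_cards E) ⟨M, hM, rfl⟩

lemma matchNum_filter_disjoint_lt {e : Finset V} (he : e ∈ E) (hne : e.Nonempty) :
    matchNum (E.filter (Disjoint · e)) < matchNum E := by
  obtain ⟨M, ⟨hME, hMdisj⟩, hMcard⟩ :=
    exists_isMatching_card_eq_matchNum (E.filter (Disjoint · e))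
  have heM : e ∉ M := fun h => hne.not_disjoint_self (mem_filter.1 (hME h)).2
  have hdisj : ∀ f ∈ M, f ∩ e = ∅ := fun f hf =>
    disjoint_iff_inter_eq_empty.1 (mem_filter.1 (hME hf)).2
  have hmatch : isMatching E (insert e M) := by
    refine ⟨insert_subset he fun f hf => (mem_filter.1 (hME hf)).1, ?_⟩
    simp only [mem_insert]
    rintro f (rfl | hf) g (rfl | hg) hfg
    · exact absurd rfl hfg
    · rw [inter_comm]; exact hdisj g hg
    · exact hdisj f hf
    · exact hMdisj f hf g hg hfg
  have := card_le_matchNum E hmatch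
  rw [card_insert_of_notMem heM, hMcard] at this
  omega

end Matching

section Pivot

variable {E : Finset (Finset V)}

def IsPivot (E : Finset (Finset V)) (e : Finset V) (x : V) : Prop :=
  ∀ v ∉ e, (∃ f ∈ E, v ∈ f) → ∃ g ∈ E, v ∈ g ∧ g ∩ e ≠ {x}

lemma exists_isPivot {e₀ : Finset V} {x₀ : V} (he₀ : e₀ ∈ E) (hx₀ : x₀ ∈ e₀) :
    ∃ e ∈ E, ∃ x ∈ e, IsPivot E e x := by
  by_cases h : ∃ v ∉ e₀, (∃ f ∈ E, v ∈ f) ∧ ∀ f ∈ E, v ∈ f → f ∩ e₀ = {x₀}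
  · -- Then `v` is a pivot of any edge `f ∋ v`: an edge `g` with `g ∩ f = {v}` passes through
    -- `v`, hence contains `x₀ ∈ f`, forcing `x₀ = v ∈ e₀`.
    obtain ⟨v, hve₀, ⟨f, hfE, hvf⟩, hv⟩ := h
    refine ⟨f, hfE, v, hvf, fun _ _ ⟨g, hgE, hg⟩ => ⟨g, hgE, hg, fun hgf => ?_⟩⟩
    have hvg : v ∈ g := (mem_inter.1 (hgf ▸ mem_singleton_self v)).1
    have hx₀g : x₀ ∈ g := (mem_inter.1 (hv g hgE hvg ▸ mem_singleton_self x₀)).1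
    have hx₀f : x₀ ∈ f := (mem_inter.1 (hv f hfE hvf ▸ mem_singleton_self x₀)).1
    have : x₀ = v := mem_singleton.1 (hgf ▸ mem_inter.2 ⟨hx₀g, hx₀f⟩)
    exact hve₀ (this ▸ hx₀)
  · push Not at h
    exact ⟨e₀, he₀, x₀, hx₀, h⟩

lemma IsPivot.dominatesCovered_union_erase {e : Finset V} {x : V} {D : Finset V}
    (hpivot : IsPivot E e x) (he : e ∈ E) (he2 : 2 ≤ e.card)
    (hD : DominatesCovered (E.filter (Disjoint · e)) D) :
    DominatesCovered E (D ∪ e.erase x) := by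
  intro v hv hvD
  by_cases hve : v ∈ e
  · obtain rfl : v = x := by
      by_contra hvx
      exact hvD (mem_union_right _ (mem_erase.2 ⟨hvx, hve⟩))
    obtain ⟨y, hy, hyv⟩ := exists_mem_ne he2 v
    exact ⟨e, he, hve, y, hy, mem_union_right _ (mem_erase.2 ⟨hyv, hy⟩)⟩
  obtain ⟨g, hgE, hvg, hgx⟩ := hpivot v hve hv
  by_cases hge : Disjoint g e
  · obtain ⟨f, hf, hvf, u, hu, huD⟩ :=
      hD v ⟨g, mem_filter.2 ⟨hgE, hge⟩, hvg⟩ fun h => hvD (mem_union_left _ h)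
    exact ⟨f, (mem_filter.1 hf).1, hvf, u, hu, mem_union_left _ huD⟩
  obtain ⟨y, hy, hyx⟩ : ∃ y ∈ g ∩ e, y ≠ x := by
    by_contra! hsub
    exact hgx ((not_disjoint_iff_nonempty_inter.1 hge).subset_singleton_iff.1
      fun y hy => mem_singleton.2 (hsub y hy))
  obtain ⟨hyg, hye⟩ := mem_inter.1 hy
  exact ⟨g, hgE, hvg, y, hyg, mem_union_right _ (mem_erase.2 ⟨hyx, hye⟩)⟩

end Pivot

lemma exists_dominatesCovered_card_le (r : ℕ) (E : Finset (Finset V))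
    (hrank : ∀ e ∈ E, 2 ≤ e.card ∧ e.card ≤ r) :
    ∃ D : Finset V, DominatesCovered E D ∧ D.card ≤ (r - 1) * matchNum E := by
  induction E using Finset.strongInduction with
  | H E ih =>
  rcases E.eq_empty_or_nonempty with rfl | ⟨e₀, he₀⟩
  · exact ⟨∅, fun v ⟨f, hf, _⟩ => absurd hf (notMem_empty f), by simp⟩
  obtain ⟨x₀, hx₀⟩ := card_pos.1 (by linarith [hrank e₀ he₀])
  obtain ⟨e, he, x, hx, hpivot⟩ := exists_isPivot he₀ hx₀
  have hsub : E.filter (Disjoint · e) ⊂ E :=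
    filter_ssubset.2 ⟨e, he, Finset.Nonempty.not_disjoint_self ⟨x, hx⟩⟩
  obtain ⟨D, hD, hDcard⟩ := ih _ hsub fun f hf => hrank f (mem_filter.1 hf).1
  refine ⟨D ∪ e.erase x, hpivot.dominatesCovered_union_erase he (hrank e he).1 hD, ?_⟩
  have hlt := matchNum_filter_disjoint_lt E he ⟨x, hx⟩
  calc (D ∪ e.erase x).card ≤ D.card + (e.erase x).card := card_union_le _ _
    _ ≤ (r - 1) * matchNum (E.filter (Disjoint · e)) + (r - 1) := by
        rw [card_erase_of_mem hx]
        exact add_le_add hDcard (Nat.sub_le_sub_right (hrank e he).2 1)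
    _ = (r - 1) * (matchNum (E.filter (Disjoint · e)) + 1) := by ring
    _ ≤ (r - 1) * matchNum E := Nat.mul_le_mul_left _ hlt

end Domination

theorem stmt_4_general (E : Finset (Finset V)) (r : ℕ)
    (hrank : ∀ e ∈ E, 2 ≤ e.card ∧ e.card ≤ r)
    (hni : NoIsolated E) :
    domNum E ≤ (r - 1) * matchNum E := by
  obtain ⟨D, hD, hDcard⟩ := exists_dominatesCovered_card_le r E hrank
  exact (domNum_le_card (hD.isDominating hni)).trans hDcard

theorem stmt_4 (E : Finset (Finset V)) (r : ℕ) (hr : 2 ≤ r)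
    (hrank : ∀ e ∈ E, 2 ≤ e.card ∧ e.card ≤ r)
    (hni : NoIsolated E) :
    domNum E ≤ (r - 1) * matchNum E :=
  stmt_4_general E r hrank hni
end

section
/- Let H be an intersecting hypergraph of rank r with γ(H) = r − 1, and let H* be an r-uniform intersecting spanning partial hypergraph of H in which every edge contains exactly one degree-1 vertex. Then γ(H) = γ(H*) = τ(H*) = r − 1. -/
open Finset

variable {V : Type*} [DecidableEq V] [Fintype V]

theorem stmt_6 (E Estar : Finset (Finset V)) (r : ℕ)
    (hrank : ∀ e ∈ E, 2 ≤ e.card ∧ e.card ≤ r)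
    (hint : Intersecting E) (hni : NoIsolated E)
    (hdom : domNum E = r - 1)
    (hsub : Estar ⊆ E) (hsp : NoIsolated Estar)
    (hunif : ∀ e ∈ Estar, e.card = r)
    (hintS : Intersecting Estar)
    (hdeg1 : ∀ e ∈ Estar, (e.filter (fun v => degree Estar v = 1)).card = 1) :
    domNum E = domNum Estar ∧ domNum Estar = tauNum Estar ∧ tauNum Estar = r - 1 := by
  -- h1 : domNum E ≤ domNum Estar
  have hS'ne : {n | ∃ D : Finset V, isDominating Estar D ∧ D.card = n}.Nonempty :=
    ⟨_, univ, fun v hv => absurd (mem_univ v) hv, rfl⟩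
  obtain ⟨D, hD, hDcard⟩ := Nat.sInf_mem hS'ne
  have h1 : domNum E ≤ domNum Estar := by
    apply Nat.sInf_le
    refine ⟨D, fun v hv => ?_, hDcard⟩
    obtain ⟨e, he, hve, u, hue, huD⟩ := hD v hv
    exact ⟨e, hsub he, hve, u, hue, huD⟩
  -- h2 : domNum Estar ≤ tauNum Estar
  have hTne : {n | ∃ T : Finset V, isTransversal Estar T ∧ T.card = n}.Nonempty := by
    refine ⟨_, univ, fun e he => ?_, rfl⟩
    have h2e := (hrank e (hsub he)).1
    obtain ⟨v, hv⟩ := card_pos.mp (show 0 < e.card by omega)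
    exact ⟨v, hv, mem_univ v⟩
  obtain ⟨T, hT, hTcard⟩ := Nat.sInf_mem hTne
  have h2 : domNum Estar ≤ tauNum Estar := by
    apply Nat.sInf_le
    refine ⟨T, fun v hv => ?_, hTcard⟩
    obtain ⟨e, he, hve⟩ := hsp v
    obtain ⟨u, hue, huT⟩ := hT e he
    exact ⟨e, he, hve, u, hue, huT⟩
  -- h3 : tauNum Estar ≤ r - 1
  have h3 : tauNum Estar ≤ r - 1 := by
    rcases Estar.eq_empty_or_nonempty with hE | ⟨e, he⟩
    · have : tauNum Estar ≤ 0 :=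
        Nat.sInf_le ⟨∅, fun f hf => by simp [hE] at hf, card_empty⟩
      omega
    · have hr2 := (hrank e (hsub he)).1
      have her : e.card = r := hunif e he
      obtain ⟨w, hw⟩ := card_eq_one.mp (hdeg1 e he)
      have hwmem : w ∈ e ∧ degree Estar w = 1 := by
        have := hw ▸ mem_singleton_self w
        simpa using this
      apply Nat.sInf_le
      refine ⟨e.erase w, ?_, by rw [card_erase_of_mem hwmem.1, her]⟩
      intro f hf
      obtain ⟨u, hu⟩ := hintS e he f hf
      rw [mem_inter] at hu
      by_cases huw : u = w
      · have hwf : w ∈ f := huw ▸ hu.2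
        have hef : f = e := by
          have h1' : e ∈ Estar.filter (fun g => w ∈ g) := mem_filter.mpr ⟨he, hwmem.1⟩
          have h2' : f ∈ Estar.filter (fun g => w ∈ g) := mem_filter.mpr ⟨hf, hwf⟩
          obtain ⟨g, hg⟩ := card_eq_one.mp hwmem.2
          rw [hg, mem_singleton] at h1' h2'
          rw [h1', h2']
        have hne : (e.erase w).Nonempty := by
          rw [← card_pos, card_erase_of_mem hwmem.1, her]; omega
        obtain ⟨x, hx⟩ := hne
        exact ⟨x, by rw [hef]; exact mem_of_mem_erase hx, hx⟩
      · exact ⟨u, hu.2, mem_erase.mpr ⟨huw, hu.1⟩⟩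
  omega
end

section
/- Let H' be a linear intersecting (r−1)-uniform hypergraph with r ≥ 3, τ(H') = r − 1, no isolated vertices, minimum degree at least 2, and maximum degree equal to r − 1. Then H' has exactly (r−1)² − (r−1) + 1 vertices, and γ(H') = 1. -/
open Finset

variable {V : Type*} [DecidableEq V] [Fintype V]

theorem stmt_11 (E : Finset (Finset V)) (r : ℕ) (hr : 3 ≤ r)
    (hlin : Linear E) (hint : Intersecting E)
    (hunif : ∀ e ∈ E, e.card = r - 1)
    (htau : tauNum E = r - 1)
    (hni : NoIsolated E)
    (hdeg : ∀ v : V, 2 ≤ degree E v)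
    (hmax : maxDegree E = r - 1) :
    Fintype.card V = (r - 1) ^ 2 - (r - 1) + 1 ∧ domNum E = 1 := by
  set k := r - 1 with hkdef
  have hk2 : 2 ≤ k := by omega
  -- E is nonempty
  have hEne : E.Nonempty := by
    rcases Finset.eq_empty_or_nonempty E with h | h
    · exfalso
      have h0 : (0 : ℕ) ∈ {n | ∃ T : Finset V, isTransversal E T ∧ T.card = n} :=
        ⟨∅, fun e he => by simp [h] at he, rfl⟩
      have hle : tauNum E ≤ 0 := Nat.sInf_le h0
      omega
    · exact h
  obtain ⟨e₀, he₀⟩ := hEne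
  have he₀ne : e₀.Nonempty := by
    rw [← Finset.card_pos, hunif e₀ he₀]; omega
  obtain ⟨v₀, hv₀⟩ := he₀ne
  haveI : Nonempty V := ⟨v₀⟩
  -- a vertex of maximum degree
  obtain ⟨v, -, hv⟩ := Finset.exists_mem_eq_sup Finset.univ Finset.univ_nonempty
    (fun v => degree E v)
  have hvdeg : degree E v = k := by rw [← hv]; exact hmax
  set S := E.filter (fun e => v ∈ e) with hSdef
  have hScard : S.card = k := hvdeg
  have hSE : ∀ e ∈ S, e ∈ E := fun e he => (Finset.mem_filter.mp he).1
  have hSv : ∀ e ∈ S, v ∈ e := fun e he => (Finset.mem_filter.mp he).2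
  -- distinct edges through v meet exactly in {v}
  have hSint : ∀ e ∈ S, ∀ f ∈ S, e ≠ f → e ∩ f = {v} := by
    intro e he f hf hne
    have h1 : ({v} : Finset V) ⊆ e ∩ f :=
      Finset.singleton_subset_iff.mpr (Finset.mem_inter.mpr ⟨hSv e he, hSv f hf⟩)
    have h2 : (e ∩ f).card ≤ ({v} : Finset V).card := by
      rw [Finset.card_singleton]; exact hlin e (hSE e he) f (hSE f hf) hne
    exact (Finset.eq_of_subset_of_card_le h1 h2).symm
  -- every vertex lies on an edge through v
  have hcov : ∀ u : V, ∃ e ∈ S, u ∈ e := by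
    intro u
    obtain ⟨f, hfE, huf⟩ := hni u
    by_cases hvf : v ∈ f
    · exact ⟨f, Finset.mem_filter.mpr ⟨hfE, hvf⟩, huf⟩
    · have hch : ∀ e ∈ S, (f ∩ e).Nonempty := fun e he => hint f hfE e (hSE e he)
      set φ : Finset V → V := fun e => if h : (f ∩ e).Nonempty then h.choose else v with hφdef
      have hφmem : ∀ e ∈ S, φ e ∈ f ∩ e := by
        intro e he
        have h := hch e he
        simp only [hφdef, dif_pos h]
        exact h.choose_spec
      have hinj : Set.InjOn φ S := by
        intro e he e' he' heq
        by_contra hne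
        have h1 : φ e ∈ e ∩ e' := Finset.mem_inter.mpr
          ⟨(Finset.mem_inter.mp (hφmem e he)).2,
           heq ▸ (Finset.mem_inter.mp (hφmem e' he')).2⟩
        rw [hSint e he e' he' hne] at h1
        have : φ e = v := Finset.mem_singleton.mp h1
        exact hvf (this ▸ (Finset.mem_inter.mp (hφmem e he)).1)
      have hsub : S.image φ ⊆ f := by
        intro w hw
        obtain ⟨e, he, rfl⟩ := Finset.mem_image.mp hw
        exact (Finset.mem_inter.mp (hφmem e he)).1
      have hcardim : (S.image φ).card = k := by
        rw [Finset.card_image_of_injOn hinj, hScard]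
      have heq : S.image φ = f := by
        apply Finset.eq_of_subset_of_card_le hsub
        rw [hcardim, hunif f hfE]
      obtain ⟨e, he, hφe⟩ := Finset.mem_image.mp (heq.symm ▸ huf)
      exact ⟨e, he, hφe ▸ (Finset.mem_inter.mp (hφmem e he)).2⟩
  -- vertex set decomposition
  have huniv : (Finset.univ : Finset V) = insert v (S.biUnion (fun e => e.erase v)) := by
    ext u
    simp only [Finset.mem_univ, true_iff, Finset.mem_insert, Finset.mem_biUnion,
      Finset.mem_erase]
    by_cases huv : u = v
    · exact Or.inl huv
    · obtain ⟨e, he, hue⟩ := hcov u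
      exact Or.inr ⟨e, he, huv, hue⟩
  have hvnot : v ∉ S.biUnion (fun e => e.erase v) := by
    simp only [Finset.mem_biUnion, Finset.mem_erase, not_exists]
    intro e; tauto
  have hdisj : ∀ e ∈ S, ∀ f ∈ S, e ≠ f →
      Disjoint (e.erase v) (f.erase v) := by
    intro e he f hf hne
    rw [Finset.disjoint_left]
    intro w hw hw'
    have h1 : w ∈ e ∩ f := Finset.mem_inter.mpr
      ⟨Finset.mem_of_mem_erase hw, Finset.mem_of_mem_erase hw'⟩
    rw [hSint e he f hf hne] at h1
    exact (Finset.mem_erase.mp hw).1 (Finset.mem_singleton.mp h1)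
  have hbcard : (S.biUnion (fun e => e.erase v)).card = k * (k - 1) := by
    rw [Finset.card_biUnion hdisj]
    have : ∀ e ∈ S, (e.erase v).card = k - 1 := by
      intro e he
      rw [Finset.card_erase_of_mem (hSv e he), hunif e (hSE e he)]
    rw [Finset.sum_congr rfl this, Finset.sum_const, hScard, smul_eq_mul]
  have hcardV : Fintype.card V = k * (k - 1) + 1 := by
    rw [← Finset.card_univ, huniv, Finset.card_insert_of_notMem hvnot, hbcard]
  have harith : ∀ n : ℕ, 2 ≤ n → n * (n - 1) + 1 = n ^ 2 - n + 1 := by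
    intro n hn
    obtain ⟨m, rfl⟩ : ∃ m, n = m + 2 := ⟨n - 2, by omega⟩
    have h1 : (m + 2) ^ 2 = m * m + 4 * m + 4 := by ring
    have h2 : (m + 2) * (m + 2 - 1) = m * m + 3 * m + 2 := by
      have h0 : m + 2 - 1 = m + 1 := by omega
      rw [h0]; ring
    rw [h1, h2]
    omega
  constructor
  · rw [hcardV, harith k hk2]
  · -- domination number is 1
    have h1mem : (1 : ℕ) ∈ {n | ∃ D : Finset V, isDominating E D ∧ D.card = n} := by
      refine ⟨{v}, ?_, Finset.card_singleton v⟩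
      intro u _
      obtain ⟨e, he, hue⟩ := hcov u
      exact ⟨e, hSE e he, hue, v, hSv e he, Finset.mem_singleton_self v⟩
    have hle : domNum E ≤ 1 := Nat.sInf_le h1mem
    have hne0 : domNum E ≠ 0 := by
      intro h0
      rcases Nat.sInf_eq_zero.mp h0 with h | h
      · obtain ⟨D, hD, hDcard⟩ := h
        rw [Finset.card_eq_zero] at hDcard
        subst hDcard
        obtain ⟨e, -, -, u, -, hu⟩ := hD v (Finset.notMem_empty v)
        exact absurd hu (Finset.notMem_empty u)
      · exact absurd h1mem (h ▸ Set.notMem_empty 1)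
    omega
end

section
/- Every linear intersecting 3-uniform hypergraph on 7 vertices with exactly 7 edges, no isolated vertices, and transversal number 3 is isomorphic to the Fano plane. -/
open Finset

variable {V : Type*} [DecidableEq V] [Fintype V]

/-- `E` is a Fano plane on point set `S`. -/
def isFano (S : Finset V) (E : Finset (Finset V)) : Prop :=
  S.card = 7 ∧ E.card = 7 ∧ (∀ e ∈ E, e ⊆ S ∧ e.card = 3) ∧
  (∀ u ∈ S, ∀ v ∈ S, u ≠ v → ∃! e, e ∈ E ∧ u ∈ e ∧ v ∈ e)

/-- `E₁` is (a copy of) `F₁`: the Fano plane with a distinct private new vertex added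
to each edge, covering the whole vertex set. -/
def isF1 (E₁ : Finset (Finset V)) : Prop :=
  ∃ (S : Finset V) (E : Finset (Finset V)) (p : Finset V → V),
    isFano S E ∧ (∀ e ∈ E, p e ∉ S) ∧ Set.InjOn p (E : Set (Finset V)) ∧
    (∀ w : V, w ∈ S ∨ ∃ e ∈ E, p e = w) ∧
    E₁ = E.image (fun e => insert (p e) e)

/-- `E₁` is (a copy of) `F₁⁻`: the Fano plane minus an edge, with a distinct private
new vertex added to each remaining edge, covering the whole vertex set. -/
def isF1minus (E₁ : Finset (Finset V)) : Prop :=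
  ∃ (S : Finset V) (E : Finset (Finset V)) (e₀ : Finset V) (p : Finset V → V),
    isFano S E ∧ e₀ ∈ E ∧ (∀ e ∈ E.erase e₀, p e ∉ S) ∧
    Set.InjOn p ((E.erase e₀ : Finset (Finset V)) : Set (Finset V)) ∧
    (∀ w : V, w ∈ S ∨ ∃ e ∈ E.erase e₀, p e = w) ∧
    E₁ = (E.erase e₀).image (fun e => insert (p e) e)

/-- `E₂` is (a copy of) `F₂`: `F₁` with the private degree-1 vertex removed from
exactly one edge (shrinking it back to a 3-edge). -/
def isF2 (E₂ : Finset (Finset V)) : Prop :=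
  ∃ (S : Finset V) (E : Finset (Finset V)) (e₀ : Finset V) (p : Finset V → V),
    isFano S E ∧ e₀ ∈ E ∧ (∀ e ∈ E.erase e₀, p e ∉ S) ∧
    Set.InjOn p ((E.erase e₀ : Finset (Finset V)) : Set (Finset V)) ∧
    (∀ w : V, w ∈ S ∨ ∃ e ∈ E.erase e₀, p e = w) ∧
    E₂ = insert e₀ ((E.erase e₀).image (fun e => insert (p e) e))

/-- `E₃` is (a copy of) `F₃`: `F₁⁻` together with one new 4-edge `{x₁,x₂,x₃,x₄}`
whose vertices lie in four distinct edges of `F₁⁻`, with `x₁,x₂` of degree 2 and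
`x₃,x₄` of degree 1 in `F₁⁻`. -/
def isF3 (E₃ : Finset (Finset V)) : Prop :=
  ∃ (E₁ : Finset (Finset V)) (x₁ x₂ x₃ x₄ : V) (e₁ e₂ e₃ e₄ : Finset V),
    isF1minus E₁ ∧
    ({x₁, x₂, x₃, x₄} : Finset V).card = 4 ∧
    e₁ ∈ E₁ ∧ e₂ ∈ E₁ ∧ e₃ ∈ E₁ ∧ e₄ ∈ E₁ ∧
    e₁ ≠ e₂ ∧ e₁ ≠ e₃ ∧ e₁ ≠ e₄ ∧ e₂ ≠ e₃ ∧ e₂ ≠ e₄ ∧ e₃ ≠ e₄ ∧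
    x₁ ∈ e₁ ∧ x₂ ∈ e₂ ∧ x₃ ∈ e₃ ∧ x₄ ∈ e₄ ∧
    degree E₁ x₁ = 2 ∧ degree E₁ x₂ = 2 ∧ degree E₁ x₃ = 1 ∧ degree E₁ x₄ = 1 ∧
    E₃ = insert ({x₁, x₂, x₃, x₄} : Finset V) E₁

theorem stmt_13 (E : Finset (Finset V))
    (hcard : Fintype.card V = 7) (hE : E.card = 7)
    (hlin : Linear E) (hint : Intersecting E)
    (hunif : ∀ e ∈ E, e.card = 3)
    (hni : NoIsolated E)
    (htau : tauNum E = 3) :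
    isFano Finset.univ E := by
  -- Every edge's 2-subsets are pairwise disjoint across edges (linearity),
  -- so the union has 7*3 = 21 = C(7,2) elements: every pair is covered.
  have hdisj : (E : Set (Finset V)).PairwiseDisjoint
      (fun e => e.powersetCard 2) := by
    intro e he f hf hne
    simp only [Finset.disjoint_left]
    intro p hp hp'
    rw [Finset.mem_powersetCard] at hp hp'
    have hsub : p ⊆ e ∩ f := Finset.subset_inter hp.1 hp'.1
    have := Finset.card_le_card hsub
    have hlef := hlin e he f hf hne
    omega
  have hBcard : (E.biUnion (fun e => e.powersetCard 2)).card = 21 := by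
    rw [Finset.card_biUnion (fun e he f hf hne => hdisj he hf hne)]
    rw [Finset.sum_congr rfl (fun e he => by
      rw [Finset.card_powersetCard, hunif e he])]
    simp [hE]
  have hsubU : E.biUnion (fun e => e.powersetCard 2) ⊆
      (Finset.univ : Finset V).powersetCard 2 := by
    intro p hp
    rw [Finset.mem_biUnion] at hp
    obtain ⟨e, _, hp⟩ := hp
    rw [Finset.mem_powersetCard] at hp ⊢
    exact ⟨Finset.subset_univ _, hp.2⟩
  have hUcard : ((Finset.univ : Finset V).powersetCard 2).card = 21 := by
    rw [Finset.card_powersetCard, ← Finset.card_univ] at *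
    rw [hcard]
    decide
  have hBeq : E.biUnion (fun e => e.powersetCard 2) =
      (Finset.univ : Finset V).powersetCard 2 :=
    Finset.eq_of_subset_of_card_le hsubU (by omega)
  refine ⟨by simp [hcard], hE, fun e he => ⟨Finset.subset_univ _, hunif e he⟩,
    fun u _ v _ huv => ?_⟩
  have hmem : ({u, v} : Finset V) ∈ E.biUnion (fun e => e.powersetCard 2) := by
    rw [hBeq, Finset.mem_powersetCard]
    exact ⟨Finset.subset_univ _, Finset.card_pair huv⟩
  rw [Finset.mem_biUnion] at hmem
  obtain ⟨e, he, hpe⟩ := hmem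
  rw [Finset.mem_powersetCard] at hpe
  have hue : u ∈ e := hpe.1 (by simp)
  have hve : v ∈ e := hpe.1 (by simp)
  refine ⟨e, ⟨he, hue, hve⟩, ?_⟩
  rintro f ⟨hf, huf, hvf⟩
  by_contra hne
  have hsub : ({u, v} : Finset V) ⊆ f ∩ e := by
    intro x hx
    simp only [Finset.mem_insert, Finset.mem_singleton] at hx
    rcases hx with rfl | rfl <;> simp [Finset.mem_inter, *]
  have := Finset.card_le_card hsub
  rw [Finset.card_pair huv] at this
  have := hlin f hf e he hne
  omega
end

section
/- Let F₁ be the hypergraph obtained from the Fano plane F by adding, to each of the 7 edges, a distinct new vertex (so F₁ is 4-uniform on 14 vertices, with 7 edges). Then F₁ is a linear intersecting hypergraph of rank 4 with γ(F₁) = 3. -/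
open Finset

variable {V : Type*} [DecidableEq V] [Fintype V]

-- Auxiliary lemmas

lemma fano_linear {S : Finset V} {E : Finset (Finset V)} (hF : isFano S E) :
    ∀ e ∈ E, ∀ f ∈ E, e ≠ f → (e ∩ f).card ≤ 1 := by
  intro e he f hf hef
  by_contra hlt
  push_neg at hlt
  obtain ⟨u, hu, v, hv, huv⟩ := Finset.one_lt_card.mp hlt
  simp only [Finset.mem_inter] at hu hv
  obtain ⟨_, _, hsub, huniq⟩ := hF
  obtain ⟨g, _, hg⟩ := huniq u ((hsub e he).1 hu.1) v ((hsub e he).1 hv.1) huv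
  exact hef ((hg e ⟨he, hu.1, hv.1⟩).trans (hg f ⟨hf, hu.2, hv.2⟩).symm)

lemma fano_deg {S : Finset V} {E : Finset (Finset V)} (hF : isFano S E)
    {x : V} (hx : x ∈ S) : (E.filter (fun e => x ∈ e)).card = 3 := by
  obtain ⟨hS, hE, hsub, huniq⟩ := hF
  set L := E.filter (fun e => x ∈ e) with hL
  have hdisj : ∀ e ∈ L, ∀ f ∈ L, e ≠ f → Disjoint (e.erase x) (f.erase x) := by
    intro e he f hf hef
    rw [Finset.disjoint_left]
    intro v hve hvf
    have h1 : (e ∩ f).card ≤ 1 :=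
      fano_linear ⟨hS, hE, hsub, huniq⟩ e (Finset.mem_filter.mp he).1
        f (Finset.mem_filter.mp hf).1 hef
    have hx' : x ∈ e ∩ f :=
      Finset.mem_inter.mpr ⟨(Finset.mem_filter.mp he).2, (Finset.mem_filter.mp hf).2⟩
    have hv' : v ∈ e ∩ f :=
      Finset.mem_inter.mpr ⟨Finset.mem_of_mem_erase hve, Finset.mem_of_mem_erase hvf⟩
    have hvx : v ≠ x := Finset.ne_of_mem_erase hve
    have : 1 < (e ∩ f).card := Finset.one_lt_card.mpr ⟨v, hv', x, hx', hvx⟩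
    omega
  have hunion : L.biUnion (fun e => e.erase x) = S.erase x := by
    ext v
    simp only [Finset.mem_biUnion, Finset.mem_erase, hL, Finset.mem_filter]
    constructor
    · rintro ⟨e, ⟨heE, _⟩, hvx, hve⟩
      exact ⟨hvx, (hsub e heE).1 hve⟩
    · rintro ⟨hvx, hvS⟩
      obtain ⟨g, ⟨hgE, hxg, hvg⟩, _⟩ := huniq x hx v hvS (Ne.symm hvx)
      exact ⟨g, ⟨hgE, hxg⟩, hvx, hvg⟩
  have hcard : (L.biUnion (fun e => e.erase x)).card = ∑ e ∈ L, (e.erase x).card :=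
    Finset.card_biUnion hdisj
  have h2 : ∀ e ∈ L, (e.erase x).card = 2 := by
    intro e he
    rw [Finset.card_erase_of_mem (Finset.mem_filter.mp he).2,
      (hsub e (Finset.mem_filter.mp he).1).2]
  rw [hunion, Finset.card_erase_of_mem hx, hS, Finset.sum_congr rfl h2,
    Finset.sum_const, smul_eq_mul] at hcard
  omega

lemma fano_inter {S : Finset V} {E : Finset (Finset V)} (hF : isFano S E) :
    ∀ e ∈ E, ∀ f ∈ E, (e ∩ f).Nonempty := by
  classical
  intro e he f hf
  by_contra hne
  rw [Finset.not_nonempty_iff_eq_empty] at hne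
  obtain ⟨hS, hE, hsub, huniq⟩ := hF
  have hef : e ≠ f := by
    rintro rfl
    rw [Finset.inter_self] at hne
    have := (hsub e he).2
    simp [hne] at this
  obtain ⟨u, hu⟩ := Finset.card_pos.mp (by rw [(hsub e he).2]; norm_num)
  have huS : u ∈ S := (hsub e he).1 hu
  have hune : ∀ v ∈ f, u ≠ v := by
    intro v hv huv
    have : u ∈ e ∩ f := Finset.mem_inter.mpr ⟨hu, huv ▸ hv⟩
    simp [hne] at this
  let φ : V → Finset V := fun v =>
    if hv : v ∈ f then
      (huniq u huS v ((hsub f hf).1 hv) (hune v hv)).choose else ∅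
  have hφ : ∀ v ∈ f, (φ v ∈ E ∧ u ∈ φ v ∧ v ∈ φ v) ∧
      ∀ g, (g ∈ E ∧ u ∈ g ∧ v ∈ g) → g = φ v := by
    intro v hv
    simp only [φ, dif_pos hv]
    exact (huniq u huS v ((hsub f hf).1 hv) (hune v hv)).choose_spec
  have hmaps : ∀ v ∈ f, φ v ∈ (E.filter (fun g => u ∈ g)).erase e := by
    intro v hv
    refine Finset.mem_erase.mpr ⟨?_, Finset.mem_filter.mpr ⟨(hφ v hv).1.1, (hφ v hv).1.2.1⟩⟩
    intro hfe
    have : v ∈ e ∩ f := Finset.mem_inter.mpr ⟨hfe ▸ (hφ v hv).1.2.2, hv⟩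
    simp [hne] at this
  have hinj : ∀ v ∈ f, ∀ w ∈ f, φ v = φ w → v = w := by
    intro v hv w hw hvw
    by_contra hvwne
    have h1 : φ v ∈ E ∧ v ∈ φ v ∧ w ∈ φ v :=
      ⟨(hφ v hv).1.1, (hφ v hv).1.2.2, hvw ▸ (hφ w hw).1.2.2⟩
    obtain ⟨g, _, hg⟩ := huniq v ((hsub f hf).1 hv) w ((hsub f hf).1 hw) hvwne
    have heq : φ v = f := (hg (φ v) h1).trans (hg f ⟨hf, hv, hw⟩).symm
    have hu2 : u ∈ f := by rw [← heq]; exact (hφ v hv).1.2.1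
    have : u ∈ e ∩ f := Finset.mem_inter.mpr ⟨hu, hu2⟩
    simp [hne] at this
  have hle : f.card ≤ ((E.filter (fun g => u ∈ g)).erase e).card :=
    Finset.card_le_card_of_injOn φ hmaps hinj
  have hdeg : (E.filter (fun g => u ∈ g)).card = 3 := fano_deg ⟨hS, hE, hsub, huniq⟩ huS
  have heL : e ∈ E.filter (fun g => u ∈ g) := Finset.mem_filter.mpr ⟨he, hu⟩
  rw [(hsub f hf).2, Finset.card_erase_of_mem heL, hdeg] at hle
  omega

theorem stmt_16 (E₁ : Finset (Finset V)) (h : isF1 E₁) :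
    Linear E₁ ∧ Intersecting E₁ ∧ (∀ e ∈ E₁, e.card ≤ 4) ∧ domNum E₁ = 3 := by
  classical
  obtain ⟨S, E, p, hF, hp, hinjp, hcover, hE1⟩ := h
  obtain ⟨hS, hEc, hsub, huniq⟩ := hF
  have hpe : ∀ e ∈ E, p e ∉ e := fun e he h' => hp e he ((hsub e he).1 h')
  have hins : ∀ e ∈ E, ∀ f ∈ E, e ≠ f →
      insert (p e) e ∩ insert (p f) f = e ∩ f := by
    intro e he f hf hef
    ext w
    simp only [Finset.mem_inter, Finset.mem_insert]
    constructor
    · rintro ⟨(rfl | hwe), (h2 | hwf)⟩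
      · exact absurd (hinjp (by exact_mod_cast he) (by exact_mod_cast hf) h2) hef
      · exact absurd ((hsub f hf).1 hwf) (hp e he)
      · exact absurd ((hsub e he).1 hwe) (h2 ▸ hp f hf)
      · exact ⟨hwe, hwf⟩
    · exact fun ⟨a, b⟩ => ⟨Or.inr a, Or.inr b⟩
  refine ⟨?_, ?_, ?_, ?_⟩
  · -- Linear
    intro e' he' f' hf' hne'
    rw [hE1, Finset.mem_image] at he' hf'
    obtain ⟨e, he, rfl⟩ := he'
    obtain ⟨f, hf, rfl⟩ := hf'
    have hef : e ≠ f := by rintro rfl; exact hne' rfl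
    rw [hins e he f hf hef]
    exact fano_linear ⟨hS, hEc, hsub, huniq⟩ e he f hf hef
  · -- Intersecting
    intro e' he' f' hf'
    rw [hE1, Finset.mem_image] at he' hf'
    obtain ⟨e, he, rfl⟩ := he'
    obtain ⟨f, hf, rfl⟩ := hf'
    by_cases hef : e = f
    · subst hef
      rw [Finset.inter_self]
      exact Finset.insert_nonempty _ _
    · rw [hins e he f hf hef]
      exact fano_inter ⟨hS, hEc, hsub, huniq⟩ e he f hf
  · -- rank 4
    intro e' he'
    rw [hE1, Finset.mem_image] at he'
    obtain ⟨e, he, rfl⟩ := he'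
    rw [Finset.card_insert_of_notMem (hpe e he), (hsub e he).2]
  · -- domination number
    obtain ⟨e₀, he₀⟩ := Finset.card_pos.mp (by rw [hEc]; norm_num : 0 < E.card)
    have hdom : isDominating E₁ e₀ := by
      intro v hv
      rcases hcover v with hvS | ⟨e, he, rfl⟩
      · obtain ⟨a, ha⟩ := Finset.card_pos.mp
          (by rw [(hsub e₀ he₀).2]; norm_num : 0 < e₀.card)
        have hva : v ≠ a := fun h => hv (h ▸ ha)
        obtain ⟨g, ⟨hgE, hvg, hag⟩, _⟩ := huniq v hvS a ((hsub e₀ he₀).1 ha) hva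
        exact ⟨insert (p g) g, hE1 ▸ Finset.mem_image_of_mem _ hgE,
          Finset.mem_insert_of_mem hvg, a, Finset.mem_insert_of_mem hag, ha⟩
      · obtain ⟨u, hu⟩ := fano_inter ⟨hS, hEc, hsub, huniq⟩ e he e₀ he₀
        rw [Finset.mem_inter] at hu
        exact ⟨insert (p e) e, hE1 ▸ Finset.mem_image_of_mem _ he,
          Finset.mem_insert_self _ _, u, Finset.mem_insert_of_mem hu.1, hu.2⟩
    have hmem3 : (3 : ℕ) ∈ {n | ∃ D : Finset V, isDominating E₁ D ∧ D.card = n} :=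
      ⟨e₀, hdom, (hsub e₀ he₀).2⟩
    have hlow : ∀ n ∈ {n | ∃ D : Finset V, isDominating E₁ D ∧ D.card = n}, 3 ≤ n := by
      rintro n ⟨D, hD, rfl⟩
      by_contra hlt
      push_neg at hlt
      have hDle : D.card ≤ 2 := by omega
      have key : ∀ e ∈ E, ∃ d ∈ D, d ∈ insert (p e) e := by
        intro e he
        by_cases hpeD : p e ∈ D
        · exact ⟨p e, hpeD, Finset.mem_insert_self _ _⟩
        · obtain ⟨e', he', hpe', u, hu, huD⟩ := hD (p e) hpeD
          rw [hE1, Finset.mem_image] at he'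
          obtain ⟨f, hf, rfl⟩ := he'
          rcases Finset.mem_insert.mp hpe' with h1 | h1
          · have : e = f := hinjp (by exact_mod_cast he) (by exact_mod_cast hf) h1
            exact ⟨u, huD, this ▸ hu⟩
          · exact absurd ((hsub f hf).1 h1) (hp e he)
      have hsubE : E ⊆ D.biUnion (fun d => E.filter (fun e => d ∈ insert (p e) e)) := by
        intro e he
        obtain ⟨d, hd, hde⟩ := key e he
        exact Finset.mem_biUnion.mpr ⟨d, hd, Finset.mem_filter.mpr ⟨he, hde⟩⟩
      have hbound : ∀ d ∈ D, (E.filter (fun e => d ∈ insert (p e) e)).card ≤ 3 := by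
        intro d _
        rcases hcover d with hdS | ⟨f, hf, rfl⟩
        · have : E.filter (fun e => d ∈ insert (p e) e) = E.filter (fun e => d ∈ e) := by
            apply Finset.filter_congr
            intro e he
            simp only [Finset.mem_insert]
            constructor
            · rintro (rfl | h2)
              · exact absurd hdS (hp e he)
              · exact h2
            · exact Or.inr
          rw [this, fano_deg ⟨hS, hEc, hsub, huniq⟩ hdS]
        · have : E.filter (fun e => p f ∈ insert (p e) e) ⊆ {f} := by
            intro e he
            rw [Finset.mem_filter] at he
            rcases Finset.mem_insert.mp he.2 with h1 | h1
            · have : e = f := hinjp (by exact_mod_cast he.1) (by exact_mod_cast hf) h1.symm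
              simp [this]
            · exact absurd ((hsub e he.1).1 h1) (hp f hf)
          calc (E.filter (fun e => p f ∈ insert (p e) e)).card ≤ ({f} : Finset (Finset V)).card :=
                Finset.card_le_card this
            _ ≤ 3 := by simp
      have h7 : (7 : ℕ) ≤ 3 * D.card := by
        calc (7 : ℕ) = E.card := hEc.symm
          _ ≤ (D.biUnion (fun d => E.filter (fun e => d ∈ insert (p e) e))).card :=
              Finset.card_le_card hsubE
          _ ≤ ∑ d ∈ D, (E.filter (fun e => d ∈ insert (p e) e)).card :=
              Finset.card_biUnion_le
          _ ≤ ∑ _d ∈ D, 3 := Finset.sum_le_sum hbound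
          _ = 3 * D.card := by rw [Finset.sum_const, smul_eq_mul, mul_comm]
      omega
    unfold domNum
    exact le_antisymm (Nat.sInf_le hmem3) (le_csInf ⟨3, hmem3⟩ hlow)
end

section
/- Let H be a linear intersecting hypergraph of rank 4 with γ(H) = 3, and suppose H contains F₁ (the Fano plane with a private degree-1 vertex added to each edge) as a spanning partial hypergraph. Then H = F₁, i.e., H has no edges beyond those of F₁. -/
open Finset

variable {V : Type*} [DecidableEq V] [Fintype V]

theorem stmt_17 (E E₁ : Finset (Finset V))
    (hlin : Linear E) (hint : Intersecting E)
    (hrank : ∀ e ∈ E, e.card ≤ 4)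
    (hdom : domNum E = 3)
    (hsub : E₁ ⊆ E) (hF1 : isF1 E₁) :
    E = E₁ := by
  by_contra hne
  have hex : ∃ e ∈ E, e ∉ E₁ := by
    by_contra h; push_neg at h
    exact hne (Finset.Subset.antisymm (fun x hx => h x hx) hsub)
  obtain ⟨e, heE, heN⟩ := hex
  obtain ⟨S, E₀, p, ⟨hS7, hE07, hedges, huniq⟩, hpS, hpinj, hcover, hE₁⟩ := hF1
  set plus : Finset V → Finset V := fun f => insert (p f) f with hplus
  have hmem : ∀ f ∈ E₀, plus f ∈ E₁ := fun f hf => by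
    rw [hE₁]; exact Finset.mem_image_of_mem _ hf
  -- each new edge meets each F₁ edge in exactly one vertex
  have hone : ∀ f ∈ E₀, (e ∩ plus f).card = 1 := by
    intro f hf
    have hpE : plus f ∈ E := hsub (hmem f hf)
    have hne' : e ≠ plus f := fun h => heN (h ▸ hmem f hf)
    exact le_antisymm (hlin e heE _ hpE hne') (Finset.card_pos.mpr (hint e heE _ hpE))
  have hsum7 : ∑ f ∈ E₀, (e ∩ plus f).card = 7 := by
    rw [Finset.sum_congr rfl hone, Finset.sum_const, smul_eq_mul, mul_one, hE07]
  -- double counting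
  have hswap : ∑ f ∈ E₀, (e ∩ plus f).card
      = ∑ v ∈ e, (E₀.filter (fun f => v ∈ plus f)).card := by
    calc ∑ f ∈ E₀, (e ∩ plus f).card
        = ∑ f ∈ E₀, ∑ v ∈ e, (if v ∈ plus f then 1 else 0) := by
          refine Finset.sum_congr rfl fun f _ => ?_
          rw [← Finset.filter_mem_eq_inter]
          · exact Finset.card_filter _ _
      _ = ∑ v ∈ e, ∑ f ∈ E₀, (if v ∈ plus f then 1 else 0) := Finset.sum_comm
      _ = ∑ v ∈ e, (E₀.filter (fun f => v ∈ plus f)).card := by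
          refine Finset.sum_congr rfl fun v _ => ?_
          exact (Finset.card_filter _ _).symm
  -- degree bound for Fano points: at most 3 lines through a point
  have hdS : ∀ v ∈ S, (E₀.filter (fun f => v ∈ plus f)).card ≤ 3 := by
    intro v hv
    have hfil : E₀.filter (fun f => v ∈ plus f) = E₀.filter (fun f => v ∈ f) := by
      refine Finset.filter_congr fun f hf => ?_
      simp only [hplus, Finset.mem_insert]
      constructor
      · rintro (h | h)
        · exact absurd (h ▸ hv) (hpS f hf)
        · exact h
      · exact Or.inr
    rw [hfil]
    set L := E₀.filter (fun f => v ∈ f) with hL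
    have hLmem : ∀ f ∈ L, f ∈ E₀ ∧ v ∈ f := fun f hf => Finset.mem_filter.mp hf
    have hdisj : ∀ f ∈ L, ∀ g ∈ L, f ≠ g → Disjoint (f.erase v) (g.erase v) := by
      intro f hf g hg hfg
      rw [Finset.disjoint_left]
      intro u huf hug
      obtain ⟨hune, huf'⟩ := Finset.mem_erase.mp huf
      have hug' := (Finset.mem_erase.mp hug).2
      have huS : u ∈ S := (hedges f (hLmem f hf).1).1 huf'
      obtain ⟨l, -, hl⟩ := huniq u huS v hv hune
      exact hfg ((hl f ⟨(hLmem f hf).1, huf', (hLmem f hf).2⟩).trans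
        (hl g ⟨(hLmem g hg).1, hug', (hLmem g hg).2⟩).symm)
    have hbu : L.biUnion (fun f => f.erase v) ⊆ S.erase v := by
      intro u hu
      obtain ⟨f, hf, hu'⟩ := Finset.mem_biUnion.mp hu
      obtain ⟨hune, huf⟩ := Finset.mem_erase.mp hu'
      exact Finset.mem_erase.mpr ⟨hune, (hedges f (hLmem f hf).1).1 huf⟩
    have h1 : ∑ f ∈ L, (f.erase v).card = (L.biUnion (fun f => f.erase v)).card :=
      (Finset.card_biUnion hdisj).symm
    have h2 : ∀ f ∈ L, (f.erase v).card = 2 := by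
      intro f hf
      rw [Finset.card_erase_of_mem (hLmem f hf).2, (hedges f (hLmem f hf).1).2]
    have h3 : ∑ f ∈ L, (f.erase v).card = 2 * L.card := by
      rw [Finset.sum_congr rfl h2, Finset.sum_const, smul_eq_mul, mul_comm]
    have h4 := Finset.card_le_card hbu
    have h5 : (S.erase v).card = 6 := by rw [Finset.card_erase_of_mem hv, hS7]
    omega
  -- degree bound for private vertices
  have hdP : ∀ v ∉ S, (E₀.filter (fun f => v ∈ plus f)).card ≤ 1 := by
    intro v hv
    refine Finset.card_le_one.mpr fun f hf g hg => ?_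
    obtain ⟨hfE, hvf⟩ := Finset.mem_filter.mp hf
    obtain ⟨hgE, hvg⟩ := Finset.mem_filter.mp hg
    have hvf' : v = p f := by
      rcases Finset.mem_insert.mp hvf with h | h
      · exact h
      · exact absurd ((hedges f hfE).1 h) hv
    have hvg' : v = p g := by
      rcases Finset.mem_insert.mp hvg with h | h
      · exact h
      · exact absurd ((hedges g hgE).1 h) hv
    exact hpinj (Finset.mem_coe.mpr hfE) (Finset.mem_coe.mpr hgE)
      (hvf'.symm.trans hvg')
  -- at most one Fano point in e
  have heS : (e.filter (fun v => v ∈ S)).card ≤ 1 := by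
    refine Finset.card_le_one.mpr fun u hu v hv => ?_
    obtain ⟨hue, huS⟩ := Finset.mem_filter.mp hu
    obtain ⟨hve, hvS⟩ := Finset.mem_filter.mp hv
    by_contra huv
    obtain ⟨l, ⟨hlE, hul, hvl⟩, -⟩ := huniq u huS v hvS huv
    have hsub2 : ({u, v} : Finset V) ⊆ e ∩ plus l := by
      intro x hx
      rcases Finset.mem_insert.mp hx with h | h
      · subst h; exact Finset.mem_inter.mpr ⟨hue, Finset.mem_insert_of_mem hul⟩
      · have := Finset.mem_singleton.mp h; subst this
        exact Finset.mem_inter.mpr ⟨hve, Finset.mem_insert_of_mem hvl⟩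
    have h2 : 2 ≤ (e ∩ plus l).card :=
      (Finset.card_pair huv) ▸ Finset.card_le_card hsub2
    rw [hone l hlE] at h2; omega
  -- combine
  have hsplit := Finset.sum_filter_add_sum_filter_not e (fun v => v ∈ S)
      (fun v => (E₀.filter (fun f => v ∈ plus f)).card)
  have hA : ∑ v ∈ e.filter (fun v => v ∈ S), (E₀.filter (fun f => v ∈ plus f)).card
      ≤ 3 * (e.filter (fun v => v ∈ S)).card := by
    calc ∑ v ∈ e.filter (fun v => v ∈ S), (E₀.filter (fun f => v ∈ plus f)).card
        ≤ ∑ _v ∈ e.filter (fun v => v ∈ S), 3 :=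
        Finset.sum_le_sum fun v hv => hdS v (Finset.mem_filter.mp hv).2
      _ = _ := by rw [Finset.sum_const, smul_eq_mul, mul_comm]
  have hB : ∑ v ∈ e.filter (fun v => ¬ v ∈ S), (E₀.filter (fun f => v ∈ plus f)).card
      ≤ (e.filter (fun v => ¬ v ∈ S)).card := by
    calc ∑ v ∈ e.filter (fun v => ¬ v ∈ S), (E₀.filter (fun f => v ∈ plus f)).card
        ≤ ∑ _v ∈ e.filter (fun v => ¬ v ∈ S), 1 :=
        Finset.sum_le_sum fun v hv => hdP v (Finset.mem_filter.mp hv).2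
      _ = _ := by rw [Finset.sum_const, smul_eq_mul, mul_one]
  have hcards := Finset.card_filter_add_card_filter_not
    (s := e) (p := fun v => v ∈ S)
  have hc4 := hrank e heE
  rw [hswap] at hsum7
  omega
end
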